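/- Convergence of the parallel Howard iteration: assume (i) for every policy α the matrix B(α) is monotone; (ii) each r_i(a) : ℝ^N → ℝ is nondecreasing with respect to the componentwise order (hypothesis H4) and continuous; (iii) the coupled scheme G, defined componentwise by G(V)_i = min_{a∈A}(b_i(a)·V − r_i(a)(V)), is monotone (V ≤ W implies G(V) ≤ G(W)); (iv) there exists V* ∈ ℝ^N with G(V*) = 0. Let (V^s)_{s≥0} be a sequence in ℝ^N with V⁰ ≤ V* and such that for every s, min_{a∈A}(b_i(a)·V^{s+1} − r_i(a)(V^s)) = 0 for every component i. Then: (a) V^s ≤ V^{s+1} ≤ V* componentwise for all s; (b) V^s converges componentwise to a limit L ∈ ℝ^N with L ≤ V*; and (c) the limit satisfies G(L) = 0. -/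

import Mathlib

/-!
Freezing the data at `W` turns the scheme into `F(V, W)_i = min_a (b_i(a)·V − r_i(a)(W))`,
and the iteration reads `F(V^{s+1}, V^s) = 0`. Choosing a policy that attains the minimum
in `F(x, U) ≤ 0` gives `B(α) x ≤ c(α, U)`, while `0 ≤ F(y, U')` gives `c(α, U') ≤ B(α) y`;
monotonicity of `B(α)` then compares `x ≤ y` whenever `r(U) ≤ r(U')`. This comparison
yields both `V^{s+1} ≤ V*` (using that `r` is nondecreasing) and `V^s ≤ V^{s+1}` (using
`G(V^s) ≤ G(V*) = 0`). The bounded nondecreasing sequence converges, and continuity of `F`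
passes `F(V^{s+1}, V^s) = 0` to the limit.
-/

open Matrix Filter Topology

/-- A square real matrix is monotone if it is invertible and every entry of its
inverse is nonnegative. -/
def IsMonotoneMatrix {N : ℕ} (M : Matrix (Fin N) (Fin N) ℝ) : Prop :=
  IsUnit M ∧ ∀ i j, 0 ≤ M⁻¹ i j

open Finset

theorem IsMonotoneMatrix.le_of_mulVec_le {N : ℕ} {M : Matrix (Fin N) (Fin N) ℝ}
    (hM : IsMonotoneMatrix M) {x y : Fin N → ℝ} (h : M *ᵥ x ≤ M *ᵥ y) : x ≤ y := by
  have hinv : M⁻¹ * M = 1 := nonsing_inv_mul M ((isUnit_iff_isUnit_det M).1 hM.1)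
  intro i
  calc x i = (M⁻¹ *ᵥ (M *ᵥ x)) i := by rw [mulVec_mulVec, hinv, one_mulVec]
    _ ≤ (M⁻¹ *ᵥ (M *ᵥ y)) i :=
      dotProduct_le_dotProduct_of_nonneg_left h fun j => hM.2 i j
    _ = y i := by rw [mulVec_mulVec, hinv, one_mulVec]

section CoupledScheme

variable {N : ℕ} {A : Type*} [Fintype A] [Nonempty A]
  (b : Fin N → A → Fin N → ℝ) (r : Fin N → A → (Fin N → ℝ) → ℝ)

noncomputable def coupledScheme (V W : Fin N → ℝ) : Fin N → ℝ :=
  fun i => univ.inf' univ_nonempty fun a => b i a ⬝ᵥ V - r i a W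

theorem coupledScheme_le (V W : Fin N → ℝ) (i : Fin N) (a : A) :
    coupledScheme b r V W i ≤ b i a ⬝ᵥ V - r i a W :=
  inf'_le _ (mem_univ a)

theorem exists_policy_coupledScheme_eq (V W : Fin N → ℝ) :
    ∃ α : Fin N → A, ∀ i, coupledScheme b r V W i = b i (α i) ⬝ᵥ V - r i (α i) W := by
  choose α _ hα using fun i => exists_mem_eq_inf' (univ_nonempty (α := A))
    fun a => b i a ⬝ᵥ V - r i a W
  exact ⟨α, hα⟩

theorem continuous_coupledScheme (hr : ∀ i a, Continuous (r i a)) :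
    Continuous fun p : (Fin N → ℝ) × (Fin N → ℝ) => coupledScheme b r p.1 p.2 :=
  continuous_pi fun i => Continuous.finset_inf'_apply _ fun a _ =>
    (continuous_const.dotProduct continuous_fst).sub
      ((hr i a).comp continuous_snd)

variable {b r}

theorem le_of_coupledScheme_nonpos_of_nonneg
    (hmon : ∀ α : Fin N → A, IsMonotoneMatrix (of fun i j => b i (α i) j))
    {x y U U' : Fin N → ℝ} (hx : coupledScheme b r x U ≤ 0) (hy : 0 ≤ coupledScheme b r y U')
    (hr : ∀ i a, r i a U ≤ r i a U') : x ≤ y := by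
  obtain ⟨α, hα⟩ := exists_policy_coupledScheme_eq b r x U
  refine (hmon α).le_of_mulVec_le fun i => ?_
  have hxi : b i (α i) ⬝ᵥ x - r i (α i) U ≤ 0 := hα i ▸ hx i
  have hyi : 0 ≤ b i (α i) ⬝ᵥ y - r i (α i) U' := (hy i).trans (coupledScheme_le b r y U' i (α i))
  change b i (α i) ⬝ᵥ x ≤ b i (α i) ⬝ᵥ y
  linarith [hr i (α i)]

theorem coupledScheme_eq_zero_of_tendsto (hr : ∀ i a, Continuous (r i a))
    {V : ℕ → Fin N → ℝ} {L : Fin N → ℝ} (hV : Tendsto V atTop (𝓝 L))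
    (hstep : ∀ s, coupledScheme b r (V (s + 1)) (V s) = 0) :
    coupledScheme b r L L = 0 := by
  have hpair : Tendsto (fun s => (V (s + 1), V s)) atTop (𝓝 (L, L)) :=
    (hV.comp (tendsto_add_atTop_nat 1)).prodMk_nhds hV
  have hlim := ((continuous_coupledScheme b r hr).tendsto (L, L)).comp hpair
  simp only [Function.comp_def, hstep] at hlim
  exact tendsto_nhds_unique hlim tendsto_const_nhds

end CoupledScheme

theorem stmt9_general {N : ℕ} {A : Type*} [Fintype A] [Nonempty A]
    (b : Fin N → A → (Fin N → ℝ)) (r : Fin N → A → (Fin N → ℝ) → ℝ)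
    (hmonM : ∀ α : Fin N → A, IsMonotoneMatrix (Matrix.of fun i j => b i (α i) j))
    (hH4 : ∀ (i : Fin N) (a : A) (W₁ W₂ : Fin N → ℝ),
      (∀ j, W₁ j ≤ W₂ j) → r i a W₁ ≤ r i a W₂)
    (hrcont : ∀ (i : Fin N) (a : A), Continuous (r i a))
    (G : (Fin N → ℝ) → (Fin N → ℝ))
    (hG : ∀ (V : Fin N → ℝ) (i : Fin N),
      G V i = Finset.univ.inf' Finset.univ_nonempty (fun a : A => b i a ⬝ᵥ V - r i a V))
    (hGmono : ∀ V W : Fin N → ℝ, (∀ i, V i ≤ W i) → ∀ i, G V i ≤ G W i)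
    (Vstar : Fin N → ℝ) (hVstar : ∀ i, G Vstar i = 0)
    (V : ℕ → (Fin N → ℝ)) (hV0 : ∀ i, V 0 i ≤ Vstar i)
    (hstep : ∀ (s : ℕ) (i : Fin N),
      Finset.univ.inf' Finset.univ_nonempty
        (fun a : A => b i a ⬝ᵥ V (s + 1) - r i a (V s)) = 0) :
    (∀ (s : ℕ) (i : Fin N), V s i ≤ V (s + 1) i ∧ V (s + 1) i ≤ Vstar i) ∧
    ∃ L : Fin N → ℝ,
      (∀ i, Tendsto (fun s => V s i) atTop (𝓝 (L i))) ∧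
      (∀ i, L i ≤ Vstar i) ∧
      (∀ i, G L i = 0) := by
  have hG' : G = fun W => coupledScheme b r W W := funext fun W => funext (hG W)
  have hstep' : ∀ s, coupledScheme b r (V (s + 1)) (V s) = 0 := fun s => funext (hstep s)
  subst hG'
  have hbound : ∀ s, V s ≤ Vstar := by
    intro s
    induction s with
    | zero => exact hV0
    | succ s ih =>
      exact le_of_coupledScheme_nonpos_of_nonneg hmonM (hstep' s).le
        (funext hVstar).ge fun i a => hH4 i a _ _ ih
  have hmono : Monotone V := monotone_nat_of_le_succ fun s =>
    le_of_coupledScheme_nonpos_of_nonneg hmonM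
      (fun i => (hGmono _ _ (hbound s) i).trans (hVstar i).le) (hstep' s).ge fun _ _ => le_rfl
  have hlim : Tendsto V atTop (𝓝 (⨆ s, V s)) :=
    tendsto_atTop_ciSup hmono ⟨Vstar, Set.forall_mem_range.2 hbound⟩
  refine ⟨fun s i => ⟨hmono s.le_succ i, hbound (s + 1) i⟩, ⨆ s, V s,
    tendsto_pi_nhds.1 hlim, ciSup_le hbound, ?_⟩
  exact congrFun (coupledScheme_eq_zero_of_tendsto hrcont hlim hstep')

/-- Convergence of the parallel Howard iteration: under monotonicity of
all the matrices `B(α)`, monotonicity and continuity of the data `r_i(a)` (H4), the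
monotonicity of the coupled scheme `G`, and the existence of `V*` with `G(V*) = 0`,
any sequence `V^s` with `V⁰ ≤ V*` and
`min_{a∈A} (b_i(a)·V^{s+1} − r_i(a)(V^s)) = 0` for all `i` satisfies:
(a) `V^s ≤ V^{s+1} ≤ V*` for all `s`; (b) `V^s` converges componentwise to some
`L ≤ V*`; (c) `G(L) = 0`. -/
theorem stmt9 {N : ℕ} (hN : 1 ≤ N) {A : Type*} [Fintype A] [Nonempty A]
    (b : Fin N → A → (Fin N → ℝ)) (r : Fin N → A → (Fin N → ℝ) → ℝ)
    (hmonM : ∀ α : Fin N → A, IsMonotoneMatrix (Matrix.of fun i j => b i (α i) j))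
    (hH4 : ∀ (i : Fin N) (a : A) (W₁ W₂ : Fin N → ℝ),
      (∀ j, W₁ j ≤ W₂ j) → r i a W₁ ≤ r i a W₂)
    (hrcont : ∀ (i : Fin N) (a : A), Continuous (r i a))
    (G : (Fin N → ℝ) → (Fin N → ℝ))
    (hG : ∀ (V : Fin N → ℝ) (i : Fin N),
      G V i = Finset.univ.inf' Finset.univ_nonempty (fun a : A => b i a ⬝ᵥ V - r i a V))
    (hGmono : ∀ V W : Fin N → ℝ, (∀ i, V i ≤ W i) → ∀ i, G V i ≤ G W i)
    (Vstar : Fin N → ℝ) (hVstar : ∀ i, G Vstar i = 0)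
    (V : ℕ → (Fin N → ℝ)) (hV0 : ∀ i, V 0 i ≤ Vstar i)
    (hstep : ∀ (s : ℕ) (i : Fin N),
      Finset.univ.inf' Finset.univ_nonempty
        (fun a : A => b i a ⬝ᵥ V (s + 1) - r i a (V s)) = 0) :
    (∀ (s : ℕ) (i : Fin N), V s i ≤ V (s + 1) i ∧ V (s + 1) i ≤ Vstar i) ∧
    ∃ L : Fin N → ℝ,
      (∀ i, Tendsto (fun s => V s i) atTop (𝓝 (L i))) ∧
      (∀ i, L i ≤ Vstar i) ∧
      (∀ i, G L i = 0) :=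
  stmt9_general b r hmonM hH4 hrcont G hG hGmono Vstar hVstar V hV0 hstep
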